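/- Let A = (a_ij) be an n×n matrix with nonnegative real entries whose tropical spectral radius λ = λ(A) is positive, and set B = (λ⁻¹A)*, the Kleene star of λ⁻¹A. Then a positive vector x ∈ ℝⁿ satisfies max_{i,j} a_ij·x_j/x_i = λ (i.e. x minimizes x⁻⊗A⊗x over positive vectors) if and only if x = B⊗u for some positive vector u ∈ ℝⁿ. -/

import Mathlib

/-- Max-times matrix product: `(A ⊗ B)_ik = max_j a_ij · b_jk`. -/
noncomputable def tMul {n : ℕ} (A B : Matrix (Fin n) (Fin n) ℝ) : Matrix (Fin n) (Fin n) ℝ :=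
  fun i k => ⨆ j, A i j * B j k

/-- Max-times matrix powers, with `A^⊗0 = I`. -/
noncomputable def tPow {n : ℕ} (A : Matrix (Fin n) (Fin n) ℝ) : ℕ → Matrix (Fin n) (Fin n) ℝ
  | 0 => fun i j => if i = j then 1 else 0
  | (k + 1) => tMul A (tPow A k)

/-- Tropical trace: `tr A = max_i a_ii`. -/
noncomputable def tTr {n : ℕ} (A : Matrix (Fin n) (Fin n) ℝ) : ℝ :=
  ⨆ i, A i i

/-- Tropical spectral radius: `λ(A) = max_{1 ≤ k ≤ n} (tr (A^⊗k))^(1/k)`. -/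
noncomputable def tRadius {n : ℕ} (A : Matrix (Fin n) (Fin n) ℝ) : ℝ :=
  ⨆ k : Fin n, (tTr (tPow A ((k : ℕ) + 1))) ^ ((1 : ℝ) / ((k : ℕ) + 1))

/-- Kleene star: `A* = I ⊕ A ⊕ A^⊗2 ⊕ ⋯ ⊕ A^⊗(n−1)` in the max-times algebra. -/
noncomputable def kStar {n : ℕ} (A : Matrix (Fin n) (Fin n) ℝ) : Matrix (Fin n) (Fin n) ℝ :=
  fun i j => ⨆ k : Fin n, tPow A (k : ℕ) i j

/-!
Put `C = λ⁻¹A`. A bound `A ⊗ x ≤ s x` propagates to `A^⊗k ⊗ x ≤ sᵏ x`, hence to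
`tr A^⊗k ≤ sᵏ` and `λ ≤ s`; so `max a_ij x_j / x_i ≥ λ` for every positive `x`, with equality
iff `C ⊗ x ≤ x`. Such sub-eigenvectors are fixed by `C*`, since `C^⊗k ⊗ x ≤ x` for all `k`.
Conversely every `C* ⊗ u` is one, because `λ(C) ≤ 1` forces `C^⊗n ≤ C*`: an optimal walk of
length `n` repeats a vertex, and the closed subwalk between the repetitions has weight at most
`1`, so cutting it out leaves a walk of length `< n` that is at least as heavy.
-/

open Finset

section

variable {n : ℕ}

lemma tPow_succ_apply (C : Matrix (Fin n) (Fin n) ℝ) (k : ℕ) (i j : Fin n) :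
    tPow C (k + 1) i j = ⨆ m, C i m * tPow C k m j :=
  rfl

lemma le_tPow_succ (C : Matrix (Fin n) (Fin n) ℝ) (k : ℕ) (i m j : Fin n) :
    C i m * tPow C k m j ≤ tPow C (k + 1) i j :=
  le_ciSup (f := fun m => C i m * tPow C k m j) (Finite.bddAbove_range _) m

lemma tPow_nonneg {C : Matrix (Fin n) (Fin n) ℝ} (hC : ∀ i j, 0 ≤ C i j) :
    ∀ k i j, 0 ≤ tPow C k i j
  | 0, i, j => by by_cases h : i = j <;> simp [tPow, h]
  | k + 1, i, _ => Real.iSup_nonneg fun m => mul_nonneg (hC i m) (tPow_nonneg hC k m _)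

lemma tPow_smul {C : Matrix (Fin n) (Fin n) ℝ} {c : ℝ} (hc : 0 ≤ c) :
    ∀ k i j, tPow (fun i j => c * C i j) k i j = c ^ k * tPow C k i j
  | 0, i, j => by by_cases h : i = j <;> simp [tPow, h]
  | k + 1, i, j => by
    rw [tPow_succ_apply (fun i j => c * C i j), tPow_succ_apply,
      Real.mul_iSup_of_nonneg (pow_nonneg hc _)]
    refine iSup_congr fun m => ?_
    rw [tPow_smul hc k m j]
    ring

lemma tPow_mul_tPow_le {C : Matrix (Fin n) (Fin n) ℝ} (hC : ∀ i j, 0 ≤ C i j) :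
    ∀ a b i m j, tPow C a i m * tPow C b m j ≤ tPow C (a + b) i j
  | 0, b, i, m, j => by
    by_cases h : i = m
    · simp [tPow, h]
    · simpa [tPow, h] using tPow_nonneg hC b i j
  | a + 1, b, i, m, j => by
    rw [tPow_succ_apply, Real.iSup_mul_of_nonneg (tPow_nonneg hC b m j), Nat.add_right_comm]
    refine Real.iSup_le (fun l => ?_) (tPow_nonneg hC _ i j)
    calc C i l * tPow C a l m * tPow C b m j = C i l * (tPow C a l m * tPow C b m j) :=
          mul_assoc _ _ _
      _ ≤ C i l * tPow C (a + b) l j :=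
          mul_le_mul_of_nonneg_left (tPow_mul_tPow_le hC a b l m j) (hC i l)
      _ ≤ tPow C (a + b + 1) i j := le_tPow_succ C _ i l j

lemma le_tTr (M : Matrix (Fin n) (Fin n) ℝ) (i : Fin n) : M i i ≤ tTr M :=
  le_ciSup (f := fun i => M i i) (Finite.bddAbove_range _) i

lemma tTr_tPow_nonneg {C : Matrix (Fin n) (Fin n) ℝ} (hC : ∀ i j, 0 ≤ C i j) (k : ℕ) :
    0 ≤ tTr (tPow C k) :=
  Real.iSup_nonneg fun i => tPow_nonneg hC k i i

lemma tRadius_nonneg {C : Matrix (Fin n) (Fin n) ℝ} (hC : ∀ i j, 0 ≤ C i j) :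
    0 ≤ tRadius C :=
  Real.iSup_nonneg fun _ => Real.rpow_nonneg (tTr_tPow_nonneg hC _) _

lemma rpow_one_div_succ_le_iff {t s : ℝ} (ht : 0 ≤ t) (hs : 0 ≤ s) (k : ℕ) :
    t ^ ((1 : ℝ) / ((k : ℝ) + 1)) ≤ s ↔ t ≤ s ^ (k + 1) := by
  rw [one_div, Real.rpow_inv_le_iff_of_pos ht hs (by positivity), ← Nat.cast_succ,
    Real.rpow_natCast]

lemma tTr_tPow_le_tRadius_pow {C : Matrix (Fin n) (Fin n) ℝ} (hC : ∀ i j, 0 ≤ C i j)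
    {k : ℕ} (hk : k < n) : tTr (tPow C (k + 1)) ≤ tRadius C ^ (k + 1) :=
  (rpow_one_div_succ_le_iff (tTr_tPow_nonneg hC _) (tRadius_nonneg hC) k).1
    (le_ciSup (f := fun k : Fin n => tTr (tPow C ((k : ℕ) + 1)) ^ ((1 : ℝ) / ((k : ℕ) + 1)))
      (Finite.bddAbove_range _) ⟨k, hk⟩)

lemma tRadius_smul_le {C : Matrix (Fin n) (Fin n) ℝ} (hC : ∀ i j, 0 ≤ C i j) {c : ℝ}
    (hc : 0 ≤ c) : tRadius (fun i j => c * C i j) ≤ c * tRadius C := by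
  have hcC : 0 ≤ c * tRadius C := mul_nonneg hc (tRadius_nonneg hC)
  refine Real.iSup_le (fun k => ?_) hcC
  refine (rpow_one_div_succ_le_iff
    (tTr_tPow_nonneg (fun i j => mul_nonneg hc (hC i j)) _) hcC k).2 ?_
  rw [mul_pow]
  refine Real.iSup_le (fun i => ?_)
    (mul_nonneg (pow_nonneg hc _) (pow_nonneg (tRadius_nonneg hC) _))
  rw [tPow_smul hc]
  exact mul_le_mul_of_nonneg_left ((le_tTr _ i).trans
    (tTr_tPow_le_tRadius_pow hC k.isLt)) (pow_nonneg hc _)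

lemma tPow_succ_self_le_one {C : Matrix (Fin n) (Fin n) ℝ} (hC : ∀ i j, 0 ≤ C i j)
    (hρ : tRadius C ≤ 1) {k : ℕ} (hk : k < n) (a : Fin n) : tPow C (k + 1) a a ≤ 1 :=
  calc tPow C (k + 1) a a ≤ tTr (tPow C (k + 1)) := le_tTr _ a
    _ ≤ tRadius C ^ (k + 1) := tTr_tPow_le_tRadius_pow hC hk
    _ ≤ 1 := pow_le_one₀ (tRadius_nonneg hC) hρ

lemma tPow_mul_le_pow_mul {C : Matrix (Fin n) (Fin n) ℝ} (hC : ∀ i j, 0 ≤ C i j) {s : ℝ}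
    (hs : 0 ≤ s) {x : Fin n → ℝ} (hx : ∀ i, 0 ≤ x i) (h : ∀ i j, C i j * x j ≤ s * x i) :
    ∀ k i j, tPow C k i j * x j ≤ s ^ k * x i
  | 0, i, j => by by_cases hij : i = j <;> simp [tPow, hij, hx i]
  | k + 1, i, j => by
    rw [tPow_succ_apply, Real.iSup_mul_of_nonneg (hx j)]
    refine Real.iSup_le (fun m => ?_) (mul_nonneg (pow_nonneg hs _) (hx i))
    calc C i m * tPow C k m j * x j = C i m * (tPow C k m j * x j) := mul_assoc _ _ _
      _ ≤ C i m * (s ^ k * x m) :=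
          mul_le_mul_of_nonneg_left (tPow_mul_le_pow_mul hC hs hx h k m j) (hC i m)
      _ = s ^ k * (C i m * x m) := by ring
      _ ≤ s ^ k * (s * x i) := mul_le_mul_of_nonneg_left (h i m) (pow_nonneg hs k)
      _ = s ^ (k + 1) * x i := by ring

lemma tRadius_le_of_mul_le {C : Matrix (Fin n) (Fin n) ℝ} (hC : ∀ i j, 0 ≤ C i j) {s : ℝ}
    (hs : 0 ≤ s) {x : Fin n → ℝ} (hx : ∀ i, 0 < x i) (h : ∀ i j, C i j * x j ≤ s * x i) :
    tRadius C ≤ s := by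
  have htr : ∀ k, tTr (tPow C k) ≤ s ^ k := fun k =>
    Real.iSup_le (fun i => le_of_mul_le_mul_right
      (tPow_mul_le_pow_mul hC hs (fun i => (hx i).le) h k i i) (hx i)) (pow_nonneg hs k)
  exact Real.iSup_le
    (fun k => (rpow_one_div_succ_le_iff (tTr_tPow_nonneg hC _) hs _).2 (htr _)) hs

def walkWeight (C : Matrix (Fin n) (Fin n) ℝ) (w : ℕ → Fin n) (k : ℕ) : ℝ :=
  ∏ t ∈ range k, C (w t) (w (t + 1))

lemma walkWeight_add (C : Matrix (Fin n) (Fin n) ℝ) (w : ℕ → Fin n) (a b : ℕ) :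
    walkWeight C w (a + b) = walkWeight C w a * walkWeight C (fun t => w (a + t)) b := by
  simp only [walkWeight, prod_range_add, add_assoc]

lemma walkWeight_nonneg {C : Matrix (Fin n) (Fin n) ℝ} (hC : ∀ i j, 0 ≤ C i j)
    (w : ℕ → Fin n) (k : ℕ) : 0 ≤ walkWeight C w k :=
  prod_nonneg fun _ _ => hC _ _

lemma walkWeight_le_tPow {C : Matrix (Fin n) (Fin n) ℝ} (hC : ∀ i j, 0 ≤ C i j) :
    ∀ (k : ℕ) (w : ℕ → Fin n), walkWeight C w k ≤ tPow C k (w 0) (w k)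
  | 0, w => by simp [walkWeight, tPow]
  | k + 1, w => by
    rw [add_comm, walkWeight_add, add_comm]
    calc walkWeight C w 1 * walkWeight C (fun t => w (1 + t)) k
        ≤ C (w 0) (w 1) * tPow C k (w 1) (w (k + 1)) := by
          simpa [walkWeight, add_comm 1 k] using mul_le_mul_of_nonneg_left
            (walkWeight_le_tPow hC k fun t => w (1 + t)) (hC (w 0) (w 1))
      _ ≤ tPow C (k + 1) (w 0) (w (k + 1)) := le_tPow_succ C k _ _ _

lemma exists_walkWeight_eq_tPow (C : Matrix (Fin n) (Fin n) ℝ) :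
    ∀ (k : ℕ) (i j : Fin n), tPow C k i j ≠ 0 →
      ∃ w : ℕ → Fin n, w 0 = i ∧ w k = j ∧ walkWeight C w k = tPow C k i j
  | 0, i, j, h => by
    obtain rfl : i = j := by by_contra hij; simp [tPow, hij] at h
    exact ⟨fun _ => i, rfl, rfl, by simp [walkWeight, tPow]⟩
  | k + 1, i, j, h => by
    have : Nonempty (Fin n) := ⟨i⟩
    obtain ⟨m, hm⟩ := exists_eq_ciSup_of_finite (f := fun m => C i m * tPow C k m j)
    rw [tPow_succ_apply, ← hm] at h ⊢
    obtain ⟨w, rfl, rfl, hw⟩ := exists_walkWeight_eq_tPow C k _ j (right_ne_zero_of_mul h)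
    refine ⟨fun t => if t = 0 then i else w (t - 1), rfl, by simp, ?_⟩
    have hshift : (fun t => if 1 + t = 0 then i else w (1 + t - 1)) = w := funext fun t => by simp
    rw [add_comm, walkWeight_add, hshift, hw]
    simp [walkWeight]

lemma exists_map_eq_add_succ (w : ℕ → Fin n) :
    ∃ p d r, p + (d + 1) + r = n ∧ w p = w (p + (d + 1)) := by
  obtain ⟨a, b, hab, he⟩ :=
    Fintype.exists_ne_map_eq_of_card_lt (fun t : Fin (n + 1) => w t) (by simp)
  have ha := a.isLt
  have hb := b.isLt
  rcases lt_or_gt_of_ne (Fin.val_ne_of_ne hab) with h | h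
  · exact ⟨a, b - a - 1, n - b, by omega, by convert he using 2; omega⟩
  · exact ⟨b, a - b - 1, n - a, by omega, by convert he.symm using 2; omega⟩

lemma tPow_le_kStar (C : Matrix (Fin n) (Fin n) ℝ) {k : ℕ} (hk : k < n) (i j : Fin n) :
    tPow C k i j ≤ kStar C i j :=
  le_ciSup (f := fun k : Fin n => tPow C k i j) (Finite.bddAbove_range _) ⟨k, hk⟩

lemma one_le_kStar_self (C : Matrix (Fin n) (Fin n) ℝ) (i : Fin n) : 1 ≤ kStar C i i := by
  simpa [tPow] using tPow_le_kStar C i.pos i i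

lemma kStar_nonneg {C : Matrix (Fin n) (Fin n) ℝ} (hC : ∀ i j, 0 ≤ C i j) (i j : Fin n) :
    0 ≤ kStar C i j :=
  (tPow_nonneg hC 0 i j).trans (tPow_le_kStar C i.pos i j)

lemma tPow_card_le_kStar {C : Matrix (Fin n) (Fin n) ℝ} (hC : ∀ i j, 0 ≤ C i j)
    (hρ : tRadius C ≤ 1) (i j : Fin n) : tPow C n i j ≤ kStar C i j := by
  by_cases h0 : tPow C n i j = 0
  · exact h0 ▸ kStar_nonneg hC i j
  obtain ⟨w, rfl, rfl, hw⟩ := exists_walkWeight_eq_tPow C n i j h0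
  obtain ⟨p, d, r, hn, hcyc⟩ := exists_map_eq_add_succ w
  have hhead : walkWeight C w p ≤ tPow C p (w 0) (w p) := walkWeight_le_tPow hC p w
  have hloop : walkWeight C (fun t => w (p + t)) (d + 1) ≤ 1 := by
    refine (walkWeight_le_tPow hC _ _).trans ?_
    simpa [← hcyc] using tPow_succ_self_le_one hC hρ (by omega : d < n) (w p)
  have htail : walkWeight C (fun t => w (p + (d + 1) + t)) r ≤ tPow C r (w p) (w n) := by
    simpa [← hcyc, hn] using walkWeight_le_tPow hC r fun t => w (p + (d + 1) + t)
  calc tPow C n (w 0) (w n) = walkWeight C w (p + (d + 1) + r) := by rw [hn, hw]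
    _ = walkWeight C w p * walkWeight C (fun t => w (p + t)) (d + 1) *
          walkWeight C (fun t => w (p + (d + 1) + t)) r := by
        rw [walkWeight_add, walkWeight_add]
    _ ≤ tPow C p (w 0) (w p) * 1 * tPow C r (w p) (w n) :=
        mul_le_mul (mul_le_mul hhead hloop (walkWeight_nonneg hC _ _) (tPow_nonneg hC _ _ _))
          htail (walkWeight_nonneg hC _ _) (mul_nonneg (tPow_nonneg hC _ _ _) zero_le_one)
    _ ≤ tPow C (p + r) (w 0) (w n) := by rw [mul_one]; exact tPow_mul_tPow_le hC p r _ _ _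
    _ ≤ kStar C (w 0) (w n) := tPow_le_kStar C (by omega) _ _

lemma mul_kStar_le_kStar {C : Matrix (Fin n) (Fin n) ℝ} (hC : ∀ i j, 0 ≤ C i j)
    (hρ : tRadius C ≤ 1) (i j m : Fin n) : C i j * kStar C j m ≤ kStar C i m := by
  rw [kStar, Real.mul_iSup_of_nonneg (hC i j)]
  refine Real.iSup_le (fun k => (le_tPow_succ C k i j m).trans ?_) (kStar_nonneg hC i m)
  rcases Nat.lt_or_eq_of_le (show (k : ℕ) + 1 ≤ n from k.isLt) with hk | hk
  · exact tPow_le_kStar C hk i m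
  · rw [hk]
    exact tPow_card_le_kStar hC hρ i m

lemma eq_kStar_mul_of_mul_le {C : Matrix (Fin n) (Fin n) ℝ} (hC : ∀ i j, 0 ≤ C i j)
    {x : Fin n → ℝ} (hx : ∀ i, 0 ≤ x i) (h : ∀ i j, C i j * x j ≤ x i) (i : Fin n) :
    x i = ⨆ j, kStar C i j * x j := by
  refine le_antisymm ?_ (Real.iSup_le (fun j => ?_) (hx i))
  · exact (le_mul_of_one_le_left (hx i) (one_le_kStar_self C i)).trans
      (le_ciSup (f := fun j => kStar C i j * x j) (Finite.bddAbove_range _) i)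
  · rw [kStar, Real.iSup_mul_of_nonneg (hx j)]
    refine Real.iSup_le (fun k => ?_) (hx i)
    simpa using tPow_mul_le_pow_mul hC zero_le_one hx (by simpa using h) k i j

lemma mul_le_of_eq_kStar_mul {C : Matrix (Fin n) (Fin n) ℝ} (hC : ∀ i j, 0 ≤ C i j)
    (hρ : tRadius C ≤ 1) {x u : Fin n → ℝ} (hu : ∀ i, 0 ≤ u i)
    (hxu : ∀ i, x i = ⨆ j, kStar C i j * u j) (i j : Fin n) : C i j * x j ≤ x i := by
  rw [hxu j, hxu i, Real.mul_iSup_of_nonneg (hC i j)]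
  refine Real.iSup_le (fun m => ?_)
    (Real.iSup_nonneg fun m => mul_nonneg (kStar_nonneg hC i m) (hu m))
  calc C i j * (kStar C j m * u m) = C i j * kStar C j m * u m := (mul_assoc _ _ _).symm
    _ ≤ kStar C i m * u m := mul_le_mul_of_nonneg_right (mul_kStar_le_kStar hC hρ i j m) (hu m)
    _ ≤ ⨆ m, kStar C i m * u m :=
        le_ciSup (f := fun m => kStar C i m * u m) (Finite.bddAbove_range _) m

lemma forall_mul_le_iff_exists_eq_kStar_mul {C : Matrix (Fin n) (Fin n) ℝ}
    (hC : ∀ i j, 0 ≤ C i j) (hρ : tRadius C ≤ 1) {x : Fin n → ℝ} (hx : ∀ i, 0 < x i) :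
    (∀ i j, C i j * x j ≤ x i) ↔
      ∃ u : Fin n → ℝ, (∀ i, 0 < u i) ∧ ∀ i, x i = ⨆ j, kStar C i j * u j :=
  ⟨fun h => ⟨x, hx, eq_kStar_mul_of_mul_le hC (fun i => (hx i).le) h⟩,
    fun ⟨_, hu, hxu⟩ => mul_le_of_eq_kStar_mul hC hρ (fun i => (hu i).le) hxu⟩

lemma iSup_iSup_div_eq_tRadius_iff {A : Matrix (Fin n) (Fin n) ℝ} (hA : ∀ i j, 0 ≤ A i j)
    {x : Fin n → ℝ} (hx : ∀ i, 0 < x i) :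
    (⨆ i, ⨆ j, A i j * x j / x i) = tRadius A ↔ ∀ i j, A i j * x j ≤ tRadius A * x i := by
  set S := ⨆ i, ⨆ j, A i j * x j / x i
  have hAS : ∀ i j, A i j * x j ≤ S * x i := fun i j =>
    (div_le_iff₀ (hx i)).1 (le_ciSup_of_le (Finite.bddAbove_range _) i
      (le_ciSup (f := fun j => A i j * x j / x i) (Finite.bddAbove_range _) j))
  have hS : 0 ≤ S := Real.iSup_nonneg fun i => Real.iSup_nonneg fun j =>
    div_nonneg (mul_nonneg (hA i j) (hx j).le) (hx i).le
  refine ⟨fun h => h ▸ hAS, fun h => le_antisymm ?_ (tRadius_le_of_mul_le hA hS hx hAS)⟩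
  exact Real.iSup_le (fun i => Real.iSup_le (fun j => (div_le_iff₀ (hx i)).2 (h i j))
    (tRadius_nonneg hA)) (tRadius_nonneg hA)

end

theorem minimizers_xAx_eq_kleene_image_general (n : ℕ)
    (A : Matrix (Fin n) (Fin n) ℝ) (hA : ∀ i j, 0 ≤ A i j)
    (hpos : 0 < tRadius A)
    (B : Matrix (Fin n) (Fin n) ℝ)
    (hB : B = kStar (fun i j => (tRadius A)⁻¹ * A i j))
    (x : Fin n → ℝ) (hx : ∀ i, 0 < x i) :
    (⨆ i, ⨆ j, A i j * x j / x i) = tRadius A ↔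
      ∃ u : Fin n → ℝ, (∀ i, 0 < u i) ∧ ∀ i, x i = ⨆ j, B i j * u j := by
  have hC : ∀ i j, 0 ≤ (tRadius A)⁻¹ * A i j := fun i j => mul_nonneg (by positivity) (hA i j)
  have hρC : tRadius (fun i j => (tRadius A)⁻¹ * A i j) ≤ 1 :=
    (tRadius_smul_le hA (by positivity)).trans (inv_mul_cancel₀ hpos.ne').le
  rw [hB, iSup_iSup_div_eq_tRadius_iff hA hx,
    ← forall_mul_le_iff_exists_eq_kStar_mul hC hρC hx]
  refine forall₂_congr fun i j => ?_
  rw [mul_assoc, inv_mul_le_iff₀ hpos]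

/-- For a nonnegative matrix `A` with positive tropical spectral radius
`λ = λ(A)` and `B = (λ⁻¹ A)*`, a positive vector `x` satisfies
`max_{i,j} a_ij · x_j / x_i = λ` (i.e. minimizes `x⁻ ⊗ A ⊗ x` over positive
vectors) if and only if `x = B ⊗ u` for some positive vector `u`. -/
theorem minimizers_xAx_eq_kleene_image (n : ℕ) (hn : 1 ≤ n)
    (A : Matrix (Fin n) (Fin n) ℝ) (hA : ∀ i j, 0 ≤ A i j)
    (hpos : 0 < tRadius A)
    (B : Matrix (Fin n) (Fin n) ℝ)
    (hB : B = kStar (fun i j => (tRadius A)⁻¹ * A i j))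
    (x : Fin n → ℝ) (hx : ∀ i, 0 < x i) :
    (⨆ i, ⨆ j, A i j * x j / x i) = tRadius A ↔
      ∃ u : Fin n → ℝ, (∀ i, 0 < u i) ∧ ∀ i, x i = ⨆ j, B i j * u j :=
  minimizers_xAx_eq_kleene_image_general n A hA hpos B hB x hx
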